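/- arXiv:2404.08593 — 6 statements merged into one kernel-verified Lean document; each statement's English description precedes it below -/
import Mathlib

section
/- Let p < 0 and a < 0 with a > a_* := -(-p)^p (1-p)^{1-p}. Define Q(κ) = a κ^{2(1-p)} + (p-1)²κ² - p² for κ > 0. Then Q has a unique critical point κ_* > 0, given by κ_*^{-2p} = -(1-p)/a; Q attains a strict local maximum at κ_*, and Q(κ_*) = -p((1-p)^{(p-1)/p}(-a)^{1/p} + p) > 0. -/
/-- For p < 0 and a_* = -(-p)^p(1-p)^{1-p} < a < 0, the function
Q(κ) = aκ^{2(1-p)} + (p-1)²κ² - p² on κ > 0 has a unique critical point κ_* > 0 with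
κ_*^{-2p} = -(1-p)/a, a strict local maximum there, and
Q(κ_*) = -p((1-p)^{(p-1)/p}(-a)^{1/p} + p) > 0. -/
theorem stmt2 (p a : ℝ) (hp : p < 0) (ha : a < 0)
    (hastar : -((-p) ^ p * (1 - p) ^ (1 - p)) < a) :
    let Q : ℝ → ℝ := fun κ => a * κ ^ (2 * (1 - p)) + (p - 1) ^ 2 * κ ^ 2 - p ^ 2
    ∃ κs : ℝ, 0 < κs ∧ κs ^ (-(2 * p)) = -(1 - p) / a ∧
      (∀ κ : ℝ, 0 < κ → (deriv Q κ = 0 ↔ κ = κs)) ∧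
      (∃ ε > 0, ∀ κ : ℝ, 0 < κ → κ ≠ κs → |κ - κs| < ε → Q κ < Q κs) ∧
      Q κs = -p * ((1 - p) ^ ((p - 1) / p) * (-a) ^ (1 / p) + p) ∧
      0 < Q κs := by
  intro Q
  have hp1 : (0:ℝ) < 1 - p := by linarith
  have hna : (0:ℝ) < -a := by linarith
  have ht : (0:ℝ) < -(2 * p) := by linarith
  set t : ℝ := -(2 * p) with htdef
  set c : ℝ := (1 - p) / (-a) with hcdef
  have hc : 0 < c := div_pos hp1 hna
  set κs : ℝ := c ^ (1 / t) with hκsdef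
  have hκs : 0 < κs := Real.rpow_pos_of_pos hc _
  have hκst : κs ^ t = c := by
    rw [hκsdef, ← Real.rpow_mul hc.le, one_div_mul_cancel ht.ne', Real.rpow_one]
  have hceq : c = -(1 - p) / a := by
    rw [hcdef]; rw [neg_div, div_neg]
  have hac : a * c = -(1 - p) := by
    rw [hcdef]; field_simp [ha.ne]
  -- derivative formula
  have hQ' : ∀ κ : ℝ, 0 < κ →
      deriv Q κ = 2 * (1 - p) * κ * (a * κ ^ t + (1 - p)) := by
    intro κ hκ
    have h1 : HasDerivAt (fun x : ℝ => a * x ^ (2 * (1 - p)))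
        (a * (2 * (1 - p) * κ ^ (2 * (1 - p) - 1))) κ :=
      (Real.hasDerivAt_rpow_const (Or.inl hκ.ne')).const_mul a
    have h2 : HasDerivAt (fun x : ℝ => (p - 1) ^ 2 * x ^ 2)
        ((p - 1) ^ 2 * (2 * κ)) κ := by
      simpa using (hasDerivAt_pow 2 κ).const_mul ((p - 1) ^ 2)
    have hQd : HasDerivAt Q
        (a * (2 * (1 - p) * κ ^ (2 * (1 - p) - 1)) + (p - 1) ^ 2 * (2 * κ)) κ := by
      exact (h1.add h2).sub_const (p ^ 2)
    rw [hQd.deriv]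
    have e1 : 2 * (1 - p) - 1 = 1 + t := by rw [htdef]; ring
    rw [e1, Real.rpow_add hκ, Real.rpow_one]
    ring
  -- sign of the factor
  have hfac_pos : ∀ κ : ℝ, 0 < κ → κ < κs → 0 < a * κ ^ t + (1 - p) := by
    intro κ hκ hlt
    have h1 : κ ^ t < c := by
      rw [← hκst]; exact Real.rpow_lt_rpow hκ.le hlt ht
    nlinarith [h1, hac]
  have hfac_neg : ∀ κ : ℝ, κs < κ → a * κ ^ t + (1 - p) < 0 := by
    intro κ hlt
    have h1 : c < κ ^ t := by
      rw [← hκst]; exact Real.rpow_lt_rpow hκs.le hlt ht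
    nlinarith [h1, hac]
  -- continuity
  have hcont : ContinuousOn Q (Set.Ici (0:ℝ)) := by
    have h2p : (0:ℝ) ≤ 2 * (1 - p) := by linarith
    apply ContinuousOn.sub
    apply ContinuousOn.add
    · exact (continuousOn_const.mul
        ((Real.continuous_rpow_const h2p).continuousOn))
    · exact continuousOn_const.mul (continuousOn_pow 2)
    · exact continuousOn_const
  have hmono : StrictMonoOn Q (Set.Icc 0 κs) := by
    apply strictMonoOn_of_deriv_pos (convex_Icc _ _)
      (hcont.mono (Set.Icc_subset_Ici_self))
    intro x hx
    rw [interior_Icc] at hx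
    rw [hQ' x hx.1]
    have := hfac_pos x hx.1 hx.2
    have h2 : 0 < 2 * (1 - p) * x := by nlinarith [hx.1]
    exact mul_pos h2 this
  have hanti : StrictAntiOn Q (Set.Ici κs) := by
    apply strictAntiOn_of_deriv_neg (convex_Ici _)
      (hcont.mono (fun x hx => le_trans hκs.le hx))
    intro x hx
    rw [interior_Ici] at hx
    rw [hQ' x (lt_trans hκs hx)]
    have := hfac_neg x hx
    have h2 : 0 < 2 * (1 - p) * x := by nlinarith [lt_trans hκs hx]
    exact mul_neg_of_pos_of_neg h2 this
  -- value computation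
  have hκs2 : (κs:ℝ) ^ (2:ℕ) = (1 - p) ^ (-(1 / p)) * (-a) ^ (1 / p) := by
    have e1 : (κs:ℝ) ^ (2:ℕ) = κs ^ ((2:ℕ):ℝ) := (Real.rpow_natCast κs 2).symm
    rw [e1, hκsdef, ← Real.rpow_mul hc.le]
    have e2 : 1 / t * ((2:ℕ):ℝ) = -(1 / p) := by
      rw [htdef]; push_cast; field_simp
    rw [e2, hcdef, Real.div_rpow hp1.le hna.le, Real.rpow_neg hna.le,
      div_eq_mul_inv, inv_inv]
  have hval1 : (1 - p) * κs ^ (2:ℕ) = (1 - p) ^ ((p - 1) / p) * (-a) ^ (1 / p) := by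
    rw [hκs2, ← mul_assoc]
    congr 1
    have : (1 - p) * (1 - p) ^ (-(1 / p)) = (1 - p) ^ ((1:ℝ) + -(1 / p)) := by
      rw [Real.rpow_add hp1, Real.rpow_one]
    rw [this]
    congr 1
    rw [eq_div_iff hp.ne, add_mul, one_mul, neg_mul, one_div,
      inv_mul_cancel₀ hp.ne]
    ring
  have hQval : Q κs = -p * (1 - p) * κs ^ (2:ℕ) - p ^ 2 := by
    show a * κs ^ (2 * (1 - p)) + (p - 1) ^ 2 * κs ^ 2 - p ^ 2 = _
    have e1 : 2 * (1 - p) = ((2:ℕ):ℝ) + t := by rw [htdef]; push_cast; ring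
    rw [e1, Real.rpow_add hκs, hκst, Real.rpow_natCast]
    nlinarith [hac, sq_nonneg κs]
  -- the key inequality from hastar
  have hX : -p < (1 - p) ^ ((p - 1) / p) * (-a) ^ (1 / p) := by
    have hnp : (0:ℝ) < -p := by linarith
    have h1 : -a < (-p) ^ p * (1 - p) ^ (1 - p) := by linarith
    have hrhs : (0:ℝ) < (-p) ^ p * (1 - p) ^ (1 - p) :=
      mul_pos (Real.rpow_pos_of_pos hnp _) (Real.rpow_pos_of_pos hp1 _)
    have h2 := Real.rpow_lt_rpow_of_neg hna h1
      (by rw [one_div]; exact inv_neg''.mpr hp : 1 / p < 0)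
    have h3 : ((-p) ^ p * (1 - p) ^ (1 - p)) ^ (1 / p)
        = -p * (1 - p) ^ ((1 - p) / p) := by
      rw [Real.mul_rpow (Real.rpow_pos_of_pos hnp p).le
        (Real.rpow_pos_of_pos hp1 _).le, ← Real.rpow_mul hnp.le,
        ← Real.rpow_mul hp1.le, mul_one_div_cancel hp.ne, Real.rpow_one]
      ring_nf
    rw [h3] at h2
    have h4 : (1 - p) ^ ((p - 1) / p) * (-p * (1 - p) ^ ((1 - p) / p)) = -p := by
      have : (1 - p) ^ ((p - 1) / p) * (1 - p) ^ ((1 - p) / p)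
          = (1 - p) ^ ((p - 1) / p + (1 - p) / p) := (Real.rpow_add hp1 _ _).symm
      have e0 : (p - 1) / p + (1 - p) / p = 0 := by field_simp; ring
      calc (1 - p) ^ ((p - 1) / p) * (-p * (1 - p) ^ ((1 - p) / p))
          = -p * ((1 - p) ^ ((p - 1) / p) * (1 - p) ^ ((1 - p) / p)) := by ring
        _ = -p * (1 - p) ^ ((p - 1) / p + (1 - p) / p) := by rw [this]
        _ = -p := by rw [e0, Real.rpow_zero, mul_one]
    calc -p = (1 - p) ^ ((p - 1) / p) * (-p * (1 - p) ^ ((1 - p) / p)) := h4.symm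
      _ < (1 - p) ^ ((p - 1) / p) * (-a) ^ (1 / p) :=
        mul_lt_mul_of_pos_left h2 (Real.rpow_pos_of_pos hp1 _)
  refine ⟨κs, hκs, by rw [hκst, hceq], ?_, ?_, ?_, ?_⟩
  · -- unique critical point
    intro κ hκ
    rw [hQ' κ hκ]
    constructor
    · intro h
      have h2 : 2 * (1 - p) * κ ≠ 0 := by positivity
      have h3 : a * κ ^ t + (1 - p) = 0 := by
        rcases mul_eq_zero.mp h with h | h
        · exact absurd h h2
        · exact h
      by_contra hne
      rcases lt_or_gt_of_ne hne with hlt | hgt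
      · exact absurd h3 (hfac_pos κ hκ hlt).ne'
      · exact absurd h3 (hfac_neg κ hgt).ne
    · intro heq
      rw [heq]
      have h3 : a * κs ^ t + (1 - p) = 0 := by
        rw [hκst]; linarith [hac]
      rw [h3, mul_zero]
  · -- strict local max
    refine ⟨1, one_pos, fun κ hκ hne _ => ?_⟩
    rcases lt_or_gt_of_ne hne with hlt | hgt
    · exact hmono ⟨hκ.le, hlt.le⟩ ⟨hκs.le, le_refl _⟩ hlt
    · exact hanti (Set.self_mem_Ici) hgt.le hgt
  · rw [hQval, ← hval1]
    ring
  · rw [hQval]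
    nlinarith [hval1, hX, hp1]
end

section
/- Let p ∈ ℝ, p ≠ 0,1, and let κ : I → ℝ be a smooth positive function satisfying p (κ^{p-1})'' + ε₁ε₂(p-1)κ^{p+1} - ε₂ p κ^{p-1} = 0 on an interval I, where ε₁, ε₂ ∈ {±1}. Then the quantity p²(p-1)²κ^{2(p-2)}(κ')² + ε₁ε₂(p-1)²κ^{2p} - ε₂ p² κ^{2(p-1)} is constant on I. -/
private lemma rpow_split (k : ℝ) (hk : 0 < k) (a : ℝ) (n : ℕ) :
    k ^ (a + (n : ℝ)) = k ^ a * k ^ n := by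
  rw [Real.rpow_add hk, Real.rpow_natCast]

private lemma key (p ε₁ ε₂ : ℝ) (κ : ℝ → ℝ) (hκ : ContDiff ℝ (⊤ : ℕ∞) κ) (s : ℝ) (hk : 0 < κ s)
    (hEL : p * deriv (deriv (fun t => κ t ^ (p - 1))) s
        + ε₁ * ε₂ * (p - 1) * κ s ^ (p + 1) - ε₂ * p * κ s ^ (p - 1) = 0) :
    HasDerivAt (fun t => p ^ 2 * (p - 1) ^ 2 * κ t ^ (2 * (p - 2)) * (deriv κ t) ^ 2
        + ε₁ * ε₂ * (p - 1) ^ 2 * κ t ^ (2 * p)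
        - ε₂ * p ^ 2 * κ t ^ (2 * (p - 1))) 0 s := by
  have hd1 : Differentiable ℝ κ := hκ.differentiable (by simp)
  have hκ' : ContDiff ℝ ((⊤ : ℕ∞) : WithTop ℕ∞) (deriv κ) :=
    (contDiff_infty_iff_deriv.mp (hκ.of_le (by simp))).2
  have hd2 : Differentiable ℝ (deriv κ) := hκ'.differentiable (by simp)
  have hκd : HasDerivAt κ (deriv κ s) s := (hd1 s).hasDerivAt
  have hκd2 : HasDerivAt (deriv κ) (deriv (deriv κ) s) s := (hd2 s).hasDerivAt
  set k' := deriv κ s with hk'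
  set k'' := deriv (deriv κ) s with hk''
  -- the open set where κ > 0
  have hNo : IsOpen (κ ⁻¹' Set.Ioi 0) := isOpen_Ioi.preimage hκ.continuous
  have hsN : s ∈ κ ⁻¹' Set.Ioi 0 := hk
  have h1 : ∀ t ∈ κ ⁻¹' Set.Ioi 0, HasDerivAt (fun y => κ y ^ (p - 1))
      (deriv κ t * (p - 1) * κ t ^ (p - 1 - 1)) t := fun t ht =>
    (hd1 t).hasDerivAt.rpow_const (Or.inl (ne_of_gt ht))
  have hev : deriv (fun y => κ y ^ (p - 1))
      =ᶠ[nhds s] fun t => deriv κ t * (p - 1) * κ t ^ (p - 1 - 1) :=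
    Filter.eventually_of_mem (hNo.mem_nhds hsN) fun t ht => (h1 t ht).deriv
  have hAt : HasDerivAt (fun t => deriv κ t * (p - 1) * κ t ^ (p - 1 - 1))
      ((k'' * (p - 1)) * κ s ^ (p - 1 - 1)
        + (k' * (p - 1)) * (k' * (p - 1 - 1) * κ s ^ (p - 1 - 1 - 1))) s :=
    (hκd2.mul_const (p - 1)).mul (hκd.rpow_const (Or.inl hk.ne'))
  have hD : deriv (deriv (fun t => κ t ^ (p - 1))) s
      = (k'' * (p - 1)) * κ s ^ (p - 1 - 1)
        + (k' * (p - 1)) * (k' * (p - 1 - 1) * κ s ^ (p - 1 - 1 - 1)) :=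
    hev.deriv_eq.trans hAt.deriv
  rw [hD] at hEL
  -- derivative of the first integral
  have hA : HasDerivAt (fun t => κ t ^ (2 * (p - 2)))
      (k' * (2 * (p - 2)) * κ s ^ (2 * (p - 2) - 1)) s := hκd.rpow_const (Or.inl hk.ne')
  have hB : HasDerivAt (fun t => (deriv κ t) ^ 2) (((2 : ℕ) : ℝ) * (deriv κ s) ^ (2 - 1) * k'') s :=
    hκd2.pow 2
  have hT1 := (hA.const_mul (p ^ 2 * (p - 1) ^ 2)).mul hB
  have hT2 := (hκd.rpow_const (Or.inl hk.ne') (p := 2 * p)).const_mul (ε₁ * ε₂ * (p - 1) ^ 2)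
  have hT3 := (hκd.rpow_const (Or.inl hk.ne') (p := 2 * (p - 1))).const_mul (ε₂ * p ^ 2)
  have hF := (hT1.add hT2).sub hT3
  refine hF.congr_deriv (Eq.symm ?_)
  -- now the algebra: everything in terms of u = κ s ^ (p - 3)
  set u := κ s ^ (p - 3) with hu
  have sp1 : ∀ n : ℕ, κ s ^ ((p - 3) + (n : ℝ)) = u * κ s ^ n := fun n => rpow_split _ hk _ n
  have sp2 : ∀ n : ℕ, κ s ^ ((p - 3) + ((p - 3) + (n : ℝ))) = u * (u * κ s ^ n) := fun n => by
    rw [Real.rpow_add hk, rpow_split _ hk]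
  have e2 : κ s ^ (p - 1 - 1 - 1) = u := by rw [show p - 1 - 1 - 1 = p - 3 by ring]
  have e1 : κ s ^ (p - 1 - 1) = u * κ s ^ (1 : ℕ) := by
    rw [show p - 1 - 1 = (p - 3) + ((1 : ℕ) : ℝ) by push_cast; ring, sp1]
  have e3 : κ s ^ (p + 1) = u * κ s ^ (4 : ℕ) := by
    rw [show p + 1 = (p - 3) + ((4 : ℕ) : ℝ) by push_cast; ring, sp1]
  have e4 : κ s ^ (p - 1) = u * κ s ^ (2 : ℕ) := by
    rw [show p - 1 = (p - 3) + ((2 : ℕ) : ℝ) by push_cast; ring, sp1]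
  have e5 : κ s ^ (2 * (p - 2) - 1) = u * (u * κ s ^ (1 : ℕ)) := by
    rw [show 2 * (p - 2) - 1 = (p - 3) + ((p - 3) + ((1 : ℕ) : ℝ)) by push_cast; ring, sp2]
  have e6 : κ s ^ (2 * (p - 2)) = u * (u * κ s ^ (2 : ℕ)) := by
    rw [show 2 * (p - 2) = (p - 3) + ((p - 3) + ((2 : ℕ) : ℝ)) by push_cast; ring, sp2]
  have e7 : κ s ^ (2 * p - 1) = u * (u * κ s ^ (5 : ℕ)) := by
    rw [show 2 * p - 1 = (p - 3) + ((p - 3) + ((5 : ℕ) : ℝ)) by push_cast; ring, sp2]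
  have e8 : κ s ^ (2 * (p - 1) - 1) = u * (u * κ s ^ (3 : ℕ)) := by
    rw [show 2 * (p - 1) - 1 = (p - 3) + ((p - 3) + ((3 : ℕ) : ℝ)) by push_cast; ring, sp2]
  rw [e1, e2, e3, e4] at hEL
  rw [e5, e6, e7, e8]
  linear_combination (-2 * p * (p - 1) * u * (κ s) * k') * hEL

/-- The first integral of the Euler–Lagrange equation for the p-elastic functional:
if κ > 0 is smooth and satisfies p(κ^{p-1})'' + ε₁ε₂(p-1)κ^{p+1} - ε₂pκ^{p-1} = 0 on an
interval I, then p²(p-1)²κ^{2(p-2)}(κ')² + ε₁ε₂(p-1)²κ^{2p} - ε₂p²κ^{2(p-1)} is constant on I. -/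
theorem stmt3 (p ε₁ ε₂ : ℝ) (hp0 : p ≠ 0) (hp1 : p ≠ 1)
    (hε₁ : ε₁ = 1 ∨ ε₁ = -1) (hε₂ : ε₂ = 1 ∨ ε₂ = -1)
    (I : Set ℝ) (hI : I.OrdConnected) (κ : ℝ → ℝ)
    (hκ : ContDiff ℝ (⊤ : ℕ∞) κ) (hpos : ∀ s ∈ I, 0 < κ s)
    (hEL : ∀ s ∈ I,
      p * deriv (deriv (fun t => κ t ^ (p - 1))) s
        + ε₁ * ε₂ * (p - 1) * κ s ^ (p + 1) - ε₂ * p * κ s ^ (p - 1) = 0) :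
    ∃ c : ℝ, ∀ s ∈ I,
      p ^ 2 * (p - 1) ^ 2 * κ s ^ (2 * (p - 2)) * (deriv κ s) ^ 2
        + ε₁ * ε₂ * (p - 1) ^ 2 * κ s ^ (2 * p)
        - ε₂ * p ^ 2 * κ s ^ (2 * (p - 1)) = c := by
  set F : ℝ → ℝ := fun t => p ^ 2 * (p - 1) ^ 2 * κ t ^ (2 * (p - 2)) * (deriv κ t) ^ 2
      + ε₁ * ε₂ * (p - 1) ^ 2 * κ t ^ (2 * p)
      - ε₂ * p ^ 2 * κ t ^ (2 * (p - 1)) with hF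
  have keyF : ∀ s ∈ I, HasDerivAt F 0 s := fun s hs =>
    key p ε₁ ε₂ κ hκ s (hpos s hs) (hEL s hs)
  rcases I.eq_empty_or_nonempty with h | ⟨a, ha⟩
  · exact ⟨0, fun s hs => absurd hs (by simp [h])⟩
  refine ⟨F a, fun s hs => ?_⟩
  show F s = F a
  rcases le_total a s with h | h
  · have hsub : Set.Icc a s ⊆ I := hI.out ha hs
    have hcont : ContinuousOn F (Set.Icc a s) := fun x hx =>
      ((keyF x (hsub hx)).differentiableAt.continuousAt).continuousWithinAt
    have hderiv : ∀ x ∈ Set.Ico a s, HasDerivWithinAt F 0 (Set.Ici x) x := fun x hx =>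
      (keyF x (hsub (Set.Ico_subset_Icc_self hx))).hasDerivWithinAt
    exact constant_of_has_deriv_right_zero hcont hderiv s (Set.right_mem_Icc.mpr h)
  · have hsub : Set.Icc s a ⊆ I := hI.out hs ha
    have hcont : ContinuousOn F (Set.Icc s a) := fun x hx =>
      ((keyF x (hsub hx)).differentiableAt.continuousAt).continuousWithinAt
    have hderiv : ∀ x ∈ Set.Ico s a, HasDerivWithinAt F 0 (Set.Ici x) x := fun x hx =>
      (keyF x (hsub (Set.Ico_subset_Icc_self hx))).hasDerivWithinAt
    exact (constant_of_has_deriv_right_zero hcont hderiv a (Set.right_mem_Icc.mpr h)).symm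
end

section
/- Let p > 1, a ∈ (a_*, 0) with a_* = -p^p(p-1)^{1-p}, and let κ be a positive solution of the conservation law p²(p-1)²κ^{2(p-2)}(κ')² + (p-1)²κ^{2p} - p²κ^{2(p-1)} = a. Then the Killing field norm a + p²κ^{2(p-1)} = (p-1)²κ^{2p} + p²((κ^{p-1})')² is strictly positive everywhere. -/
/-- Hyperbolic case (ε₁ = ε₂ = 1): for p > 1 and a ∈ (a_*, 0), along a positive solution κ
of the conservation law, a + p²κ^{2(p-1)} = (p-1)²κ^{2p} + p²((κ^{p-1})')² > 0 everywhere. -/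
theorem stmt7 (p a : ℝ) (hp : 1 < p)
    (ha : a ∈ Set.Ioo (-(p ^ p * (p - 1) ^ (1 - p))) 0)
    (κ : ℝ → ℝ) (hκ : ContDiff ℝ (⊤ : ℕ∞) κ) (hpos : ∀ s, 0 < κ s)
    (hcl : ∀ s : ℝ,
      p ^ 2 * (p - 1) ^ 2 * κ s ^ (2 * (p - 2)) * (deriv κ s) ^ 2
        + (p - 1) ^ 2 * κ s ^ (2 * p) - p ^ 2 * κ s ^ (2 * (p - 1)) = a) :
    ∀ s : ℝ,
      a + p ^ 2 * κ s ^ (2 * (p - 1)) =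
        (p - 1) ^ 2 * κ s ^ (2 * p)
          + p ^ 2 * (deriv (fun t => κ t ^ (p - 1)) s) ^ 2 ∧
      0 < a + p ^ 2 * κ s ^ (2 * (p - 1)) := by
  intro s
  have hdiff : DifferentiableAt ℝ κ s := (hκ.differentiable (by simp)).differentiableAt
  have hκs : (0:ℝ) < κ s := hpos s
  -- derivative of κ^(p-1)
  have hder : deriv (fun t => κ t ^ (p - 1)) s
      = (p - 1) * κ s ^ (p - 2) * deriv κ s := by
    have h := (hdiff.hasDerivAt.rpow_const (p := p - 1) (Or.inl (ne_of_gt hκs))).deriv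
    rw [h]
    ring_nf
  have hsq : (κ s ^ (p - 2)) ^ 2 = κ s ^ (2 * (p - 2)) := by
    rw [← Real.rpow_natCast (κ s ^ (p - 2)) 2, ← Real.rpow_mul hκs.le]
    norm_num [mul_comm]
  have key := hcl s
  constructor
  · rw [hder]
    have : ((p - 1) * κ s ^ (p - 2) * deriv κ s) ^ 2
        = (p - 1) ^ 2 * κ s ^ (2 * (p - 2)) * (deriv κ s) ^ 2 := by
      rw [mul_pow, mul_pow, hsq]
    rw [this]
    nlinarith [key]
  · have h1 : (0:ℝ) < κ s ^ (2 * p) := Real.rpow_pos_of_pos hκs _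
    have h2 : (0:ℝ) ≤ p ^ 2 * (p - 1) ^ 2 * κ s ^ (2 * (p - 2)) * (deriv κ s) ^ 2 := by
      have := Real.rpow_nonneg hκs.le (2 * (p - 2))
      positivity
    have h3 : (0:ℝ) < (p - 1) ^ 2 * κ s ^ (2 * p) := by
      have : (0:ℝ) < p - 1 := by linarith
      positivity
    linarith [key]
end

section
/- With γ as in the explicit parameterization of a p-elastic curve (coordinates involving √(ε₂a + p²κ^{2(p-1)}), angular progression θ with θ' = ε₂(p-1)√(-a)κ^p/(ε₂a + p²κ^{2(p-1)})), the velocity satisfies ⟨γ'(s), γ'(s)⟩ = 1 for all s, i.e., γ is parameterized by arc length as a space-like curve in 𝕃³. -/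
/-- The explicit parameterization of a p-elastic curve is parameterized by arc length as a
space-like curve in 𝕃³: ⟨γ'(s), γ'(s)⟩ = 1 for the metric dx² + dy² - dz². -/
theorem stmt9 (p a ε₂ : ℝ) (ha : a < 0) (hε₂ : ε₂ = 1 ∨ ε₂ = -1)
    (κ θ : ℝ → ℝ) (hκ : ∀ s, 0 < κ s)
    (hκsm : ContDiff ℝ (⊤ : ℕ∞) κ)
    (hrad : ∀ s, 0 < ε₂ * a + p ^ 2 * κ s ^ (2 * (p - 1)))
    (hcl : ∀ s : ℝ,
      p ^ 2 * (p - 1) ^ 2 * κ s ^ (2 * (p - 2)) * (deriv κ s) ^ 2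
        + ε₂ * (p - 1) ^ 2 * κ s ^ (2 * p) - ε₂ * p ^ 2 * κ s ^ (2 * (p - 1)) = a)
    (hθ : ∀ s, HasDerivAt θ
      (ε₂ * (p - 1) * Real.sqrt (-a) * κ s ^ p /
        (ε₂ * a + p ^ 2 * κ s ^ (2 * (p - 1)))) s)
    (x y z : ℝ → ℝ)
    (hx : ∀ s, x s = (1 / Real.sqrt (-a)) *
      (Real.sqrt (ε₂ * a + p ^ 2 * κ s ^ (2 * (p - 1))) * Real.cos (θ s)))
    (hy : ∀ s, y s = (1 / Real.sqrt (-a)) *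
      (Real.sqrt (ε₂ * a + p ^ 2 * κ s ^ (2 * (p - 1))) * Real.sin (θ s)))
    (hz : ∀ s, z s = (1 / Real.sqrt (-a)) * (p * κ s ^ (p - 1))) :
    ∀ s : ℝ, (deriv x s) ^ 2 + (deriv y s) ^ 2 - (deriv z s) ^ 2 = 1 := by
  intro s
  have hk : 0 < κ s := hκ s
  have hkne : κ s ≠ 0 := hk.ne'
  have hε2 : ε₂ ^ 2 = 1 := by rcases hε₂ with h | h <;> rw [h] <;> norm_num
  have hna : 0 < -a := neg_pos.mpr ha
  have hsa : 0 < Real.sqrt (-a) := Real.sqrt_pos.mpr hna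
  have hsa2 : Real.sqrt (-a) ^ 2 = -a := Real.sq_sqrt hna.le
  have hR2 := hrad s
  have hR : 0 < Real.sqrt (ε₂ * a + p ^ 2 * κ s ^ (2 * (p - 1))) := Real.sqrt_pos.mpr hR2
  have hRsq : (Real.sqrt (ε₂ * a + p ^ 2 * κ s ^ (2 * (p - 1)))) ^ 2
      = ε₂ * a + p ^ 2 * κ s ^ (2 * (p - 1)) := Real.sq_sqrt hR2.le
  have hκd : HasDerivAt κ (deriv κ s) s := ((hκsm.differentiable (by simp)) s).hasDerivAt
  have h1 : HasDerivAt (fun t => κ t ^ (2 * (p - 1)))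
      (deriv κ s * (2 * (p - 1)) * κ s ^ (2 * (p - 1) - 1)) s := hκd.rpow_const (Or.inl hkne)
  have h2 : HasDerivAt (fun t => ε₂ * a + p ^ 2 * κ t ^ (2 * (p - 1)))
      (p ^ 2 * (deriv κ s * (2 * (p - 1)) * κ s ^ (2 * (p - 1) - 1))) s :=
    (h1.const_mul _).const_add _
  have hRd : HasDerivAt (fun t => Real.sqrt (ε₂ * a + p ^ 2 * κ t ^ (2 * (p - 1))))
      ((p ^ 2 * (deriv κ s * (2 * (p - 1)) * κ s ^ (2 * (p - 1) - 1))) /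
        (2 * Real.sqrt (ε₂ * a + p ^ 2 * κ s ^ (2 * (p - 1))))) s := h2.sqrt hR2.ne'
  have hθd := hθ s
  have hxd : deriv x s = (1 / Real.sqrt (-a)) *
      ((p ^ 2 * (deriv κ s * (2 * (p - 1)) * κ s ^ (2 * (p - 1) - 1))) /
        (2 * Real.sqrt (ε₂ * a + p ^ 2 * κ s ^ (2 * (p - 1)))) * Real.cos (θ s)
       + Real.sqrt (ε₂ * a + p ^ 2 * κ s ^ (2 * (p - 1))) *
         (-Real.sin (θ s) * (ε₂ * (p - 1) * Real.sqrt (-a) * κ s ^ p /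
            (ε₂ * a + p ^ 2 * κ s ^ (2 * (p - 1)))))) := by
    rw [funext hx]
    exact ((hRd.mul hθd.cos).const_mul _).deriv
  have hyd : deriv y s = (1 / Real.sqrt (-a)) *
      ((p ^ 2 * (deriv κ s * (2 * (p - 1)) * κ s ^ (2 * (p - 1) - 1))) /
        (2 * Real.sqrt (ε₂ * a + p ^ 2 * κ s ^ (2 * (p - 1)))) * Real.sin (θ s)
       + Real.sqrt (ε₂ * a + p ^ 2 * κ s ^ (2 * (p - 1))) *
         (Real.cos (θ s) * (ε₂ * (p - 1) * Real.sqrt (-a) * κ s ^ p /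
            (ε₂ * a + p ^ 2 * κ s ^ (2 * (p - 1)))))) := by
    rw [funext hy]
    exact ((hRd.mul hθd.sin).const_mul _).deriv
  have hzd : deriv z s = (1 / Real.sqrt (-a)) *
      (p * (deriv κ s * (p - 1) * κ s ^ (p - 1 - 1))) := by
    rw [funext hz]
    exact (((hκd.rpow_const (Or.inl hkne)).const_mul p).const_mul _).deriv
  rw [hxd, hyd, hzd]
  have e1 : κ s ^ (p - 1 - 1) = κ s ^ (p - 2) := by rw [show p - 1 - 1 = p - 2 by ring]
  have e2 : κ s ^ (2 * (p - 1) - 1) = κ s ^ (p - 2) * κ s ^ (p - 2) * κ s := by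
    rw [show 2 * (p - 1) - 1 = (p - 2) + ((p - 2) + 1) by ring, Real.rpow_add hk,
      Real.rpow_add hk, Real.rpow_one]; ring
  have e3 : κ s ^ (2 * (p - 1)) = κ s ^ (p - 2) * κ s ^ (p - 2) * κ s * κ s := by
    rw [show 2 * (p - 1) = (p - 2) + ((p - 2) + (1 + 1)) by ring, Real.rpow_add hk,
      Real.rpow_add hk, Real.rpow_add hk, Real.rpow_one]; ring
  have e4 : κ s ^ (2 * (p - 2)) = κ s ^ (p - 2) * κ s ^ (p - 2) := by
    rw [show 2 * (p - 2) = (p - 2) + (p - 2) by ring, Real.rpow_add hk]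
  have e5 : κ s ^ (2 * p) = κ s ^ (p - 2) * κ s ^ (p - 2) * κ s * κ s * κ s * κ s := by
    rw [show 2 * p = (p - 2) + ((p - 2) + (1 + (1 + (1 + 1)))) by ring, Real.rpow_add hk,
      Real.rpow_add hk, Real.rpow_add hk, Real.rpow_add hk, Real.rpow_add hk, Real.rpow_one]
    ring
  have e6 : κ s ^ p = κ s ^ (p - 2) * κ s * κ s := by
    rw [show p = (p - 2) + (1 + 1) by ring, Real.rpow_add hk, Real.rpow_add hk,
      Real.rpow_one]; ring
  have hcl' := hcl s
  rw [e3, e4, e5] at hcl'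
  rw [e1, e2, e3, e6]
  rw [e3] at hRsq hR2 hR
  have hC2S2 : Real.cos (θ s) ^ 2 + Real.sin (θ s) ^ 2 = 1 := Real.cos_sq_add_sin_sq (θ s)
  set U := κ s ^ (p - 2) with hU
  set K := κ s with hK
  set D := deriv κ s with hD
  set C := Real.cos (θ s) with hC
  set S := Real.sin (θ s) with hS
  set R := Real.sqrt (ε₂ * a + p ^ 2 * (U * U * K * K)) with hRdef
  set sa := Real.sqrt (-a) with hsadef
  have hden : ε₂ * a + p ^ 2 * U ^ 2 * K ^ 2 ≠ 0 := by nlinarith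
  field_simp
  linear_combination
    ((p - 1) ^ 2 * U ^ 2 * K ^ 2 * (p ^ 4 * D ^ 2 * U ^ 2 * (ε₂ * a + p ^ 2 * U ^ 2 * K ^ 2) ^ 2 + sa ^ 2 * K ^ 2 * R ^ 4 * ε₂ ^ 2)) * hC2S2
    + ((p - 1) ^ 2 * U ^ 2 * K ^ 4 * sa ^ 2 * R ^ 4
      + a * (ε₂ * a + p ^ 2 * U ^ 2 * K ^ 2) ^ 2 * ((p - 1) ^ 2 * U ^ 2 * K ^ 4 - p ^ 2 * U ^ 2 * K ^ 2)) * hε2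
    + ((p - 1) ^ 2 * U ^ 2 * K ^ 4 * R ^ 4 - R ^ 2 * (ε₂ * a + p ^ 2 * U ^ 2 * K ^ 2) ^ 2) * hsa2
    + ((p - 1) ^ 2 * U ^ 2 * (-a * K ^ 4 * (R ^ 2 + (ε₂ * a + p ^ 2 * U ^ 2 * K ^ 2)) - p ^ 2 * D ^ 2 * (ε₂ * a + p ^ 2 * U ^ 2 * K ^ 2) ^ 2) + a * (ε₂ * a + p ^ 2 * U ^ 2 * K ^ 2) ^ 2) * hRsq
    - (a * (ε₂ * a + p ^ 2 * U ^ 2 * K ^ 2) ^ 2 * ε₂) * hcl'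
end

section
/- For p = -1 and a ∈ (-4, 0), the two positive roots α > β > 0 of aκ⁴ + 4κ² - 1 satisfy α²β² = -1/a and α² + β² = -4/a; consequently 4m/(α³√(-a)) = 4m·β/α² for any m, and the energy formula Θ_{-1}(γ) = (2m/√(-a)) ∫_{β²}^{α²} du/(u√((α²-u)(u-β²)u)) equals 4m(β/α²)·Π(ζ², ζ) with ζ = √(α²-β²)/α. -/
/-- Complete elliptic integral of the third kind (Legendre normal form). -/
noncomputable def ellPi (χ ζ : ℝ) : ℝ :=
  ∫ u in (0 : ℝ)..1, 1 / ((1 - χ * u ^ 2) * Real.sqrt ((1 - u ^ 2) * (1 - ζ ^ 2 * u ^ 2)))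

/-!
The squares `α², β²` are two distinct roots of `a u² + 4 u - 1`, so Vieta gives
`α² + β² = -4/a` and `α² β² = -1/a`, whence `√(-a) = 1/(αβ)`. The substitution
`u = α² - (α² - β²) t²` maps `(0, 1)` onto `(β², α²)`; since `1 - ζ² t² = u / α²`, it turns the
energy integrand into `2/α³` times the Legendre integrand of `Π(ζ², ζ)`.
-/

open Set MeasureTheory

theorem vieta_of_ne_of_roots {R : Type*} [CommRing R] [IsDomain R] {a b c u v : R} (huv : u ≠ v)
    (hu : a * u ^ 2 + b * u + c = 0) (hv : a * v ^ 2 + b * v + c = 0) :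
    a * (u + v) = -b ∧ a * (u * v) = c := by
  have hsum : a * (u + v) + b = 0 :=
    (mul_eq_zero.1 (by linear_combination hu - hv : (u - v) * (a * (u + v) + b) = 0)).resolve_left
      (sub_ne_zero.2 huv)
  exact ⟨by linear_combination hsum, by linear_combination u * hsum - hu⟩

theorem sqrt_neg_eq_inv_of_mul_sq_eq_neg_one {a x : ℝ} (hx : 0 < x) (h : a * x ^ 2 = -1) :
    √(-a) = x⁻¹ := by
  rw [show -a = x⁻¹ ^ 2 by field_simp; linarith, Real.sqrt_sq (inv_nonneg.2 hx.le)]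

theorem image_sub_mul_sq_Ioo_zero_one (p : ℝ) {c : ℝ} (hc : 0 < c) :
    (fun t => p - c * t ^ 2) '' Ioo 0 1 = Ioo (p - c) p := by
  ext u
  constructor
  · rintro ⟨t, ⟨ht0, ht1⟩, rfl⟩
    constructor <;> nlinarith [mul_pos hc (mul_pos ht0 ht0), mul_pos hc (mul_pos ht0 (sub_pos.2 ht1))]
  · rintro ⟨hu1, hu2⟩
    have hs : 0 < (p - u) / c := div_pos (by linarith) hc
    refine ⟨√((p - u) / c), ⟨Real.sqrt_pos.2 hs, ?_⟩, ?_⟩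
    · rw [Real.sqrt_lt' one_pos, one_pow, div_lt_one hc]
      linarith
    · simp only [Real.sq_sqrt hs.le]
      field_simp
      ring

theorem injOn_sub_mul_sq_Ioi (p : ℝ) {c : ℝ} (hc : c ≠ 0) :
    InjOn (fun t => p - c * t ^ 2) (Ioi 0) := by
  intro x hx y hy h
  have hsq : x ^ 2 = y ^ 2 := mul_left_cancel₀ hc (by linarith [h])
  exact (pow_left_inj₀ (le_of_lt hx) (le_of_lt hy) two_ne_zero).1 hsq

/-- Holds for every `g`: when `g` is not integrable both sides are `0`. -/
theorem setIntegral_Ioo_eq_setIntegral_sub_mul_sq {p c : ℝ} (hc : 0 < c) (g : ℝ → ℝ) :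
    ∫ u in Ioo (p - c) p, g u = ∫ t in Ioo 0 1, 2 * c * t * g (p - c * t ^ 2) := by
  have hderiv : ∀ t ∈ Ioo (0 : ℝ) 1,
      HasDerivWithinAt (fun t => p - c * t ^ 2) (-(2 * c * t)) (Ioo 0 1) t := fun t _ => by
    refine ((((hasDerivAt_pow 2 t).const_mul c).const_sub p).congr_deriv ?_).hasDerivWithinAt
    norm_num
    ring
  rw [← image_sub_mul_sq_Ioo_zero_one p hc, integral_image_eq_integral_abs_deriv_smul
    measurableSet_Ioo hderiv ((injOn_sub_mul_sq_Ioi p hc.ne').mono Ioo_subset_Ioi_self)]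
  refine setIntegral_congr_fun measurableSet_Ioo fun t ht => ?_
  rw [smul_eq_mul, abs_neg, abs_of_pos (by have := ht.1; positivity)]

theorem energy_integrand_sub_mul_sq {α β ζ t : ℝ} (hβ : 0 < β) (hβα : β < α)
    (hζ : ζ ^ 2 = (α ^ 2 - β ^ 2) / α ^ 2) (ht : t ∈ Ioo 0 1) :
    2 * (α ^ 2 - β ^ 2) * t *
        (1 / ((α ^ 2 - (α ^ 2 - β ^ 2) * t ^ 2) * √((α ^ 2 - (α ^ 2 - (α ^ 2 - β ^ 2) * t ^ 2)) *
          (α ^ 2 - (α ^ 2 - β ^ 2) * t ^ 2 - β ^ 2) * (α ^ 2 - (α ^ 2 - β ^ 2) * t ^ 2)))) =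
      2 / α ^ 3 * (1 / ((1 - ζ ^ 2 * t ^ 2) * √((1 - t ^ 2) * (1 - ζ ^ 2 * t ^ 2)))) := by
  obtain ⟨ht0, ht1⟩ := ht
  have hα : 0 < α := hβ.trans hβα
  set c := α ^ 2 - β ^ 2
  set w := α ^ 2 - c * t ^ 2
  have hc : 0 < c := by nlinarith
  have hw : 0 < w := by nlinarith [mul_pos hc (mul_pos ht0 (sub_pos.2 ht1))]
  have hζt : 1 - ζ ^ 2 * t ^ 2 = w / α ^ 2 := by rw [hζ]; field_simp; ring
  have hroot : √((α ^ 2 - w) * (w - β ^ 2) * w) = c * t * √((1 - t ^ 2) * w) := by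
    rw [show (α ^ 2 - w) * (w - β ^ 2) * w = (c * t) ^ 2 * ((1 - t ^ 2) * w) by ring,
      Real.sqrt_mul (sq_nonneg _), Real.sqrt_sq (by positivity)]
  have hrootζ : √((1 - t ^ 2) * (1 - ζ ^ 2 * t ^ 2)) = √((1 - t ^ 2) * w) / α := by
    rw [hζt, ← mul_div_assoc, Real.sqrt_div' _ (by positivity), Real.sqrt_sq hα.le]
  have hpos : 0 < √((1 - t ^ 2) * w) := Real.sqrt_pos.2 (mul_pos (by nlinarith) hw)
  rw [hroot, hrootζ, hζt]
  field_simp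

theorem integral_energy_eq_ellPi {α β : ℝ} (hβ : 0 < β) (hβα : β < α) :
    ∫ u in (β ^ 2)..(α ^ 2), 1 / (u * √((α ^ 2 - u) * (u - β ^ 2) * u)) =
      2 / α ^ 3 * ellPi ((√(α ^ 2 - β ^ 2) / α) ^ 2) (√(α ^ 2 - β ^ 2) / α) := by
  have hc : 0 < α ^ 2 - β ^ 2 := by nlinarith
  have hζ : (√(α ^ 2 - β ^ 2) / α) ^ 2 = (α ^ 2 - β ^ 2) / α ^ 2 := by
    rw [div_pow, Real.sq_sqrt hc.le]
  rw [intervalIntegral.integral_of_le (by linarith), integral_Ioc_eq_integral_Ioo, ellPi,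
    intervalIntegral.integral_of_le zero_le_one, integral_Ioc_eq_integral_Ioo,
    ← integral_const_mul]
  have hsubst := setIntegral_Ioo_eq_setIntegral_sub_mul_sq (p := α ^ 2) hc
    fun u => 1 / (u * √((α ^ 2 - u) * (u - β ^ 2) * u))
  rw [sub_sub_cancel] at hsubst
  rw [hsubst]
  exact setIntegral_congr_fun measurableSet_Ioo fun t ht => energy_integrand_sub_mul_sq hβ hβα hζ ht

theorem stmt18_general (a α β : ℝ)
    (hβ : 0 < β) (hβα : β < α)
    (hα : a * α ^ 4 + 4 * α ^ 2 - 1 = 0) (hβroot : a * β ^ 4 + 4 * β ^ 2 - 1 = 0) :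
    α ^ 2 * β ^ 2 = -1 / a ∧
    α ^ 2 + β ^ 2 = -4 / a ∧
    (∀ m : ℝ, 4 * m / (α ^ 3 * Real.sqrt (-a)) = 4 * m * β / α ^ 2) ∧
    ∀ m : ℝ,
      (2 * m / Real.sqrt (-a)) *
          ∫ u in (β ^ 2)..(α ^ 2), 1 / (u * Real.sqrt ((α ^ 2 - u) * (u - β ^ 2) * u)) =
        4 * m * (β / α ^ 2) *
          ellPi ((Real.sqrt (α ^ 2 - β ^ 2) / α) ^ 2) (Real.sqrt (α ^ 2 - β ^ 2) / α) := by
  have hα0 : 0 < α := hβ.trans hβα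
  obtain ⟨hsum, hprod⟩ := vieta_of_ne_of_roots (a := a) (b := 4) (c := -1)
    (by nlinarith : α ^ 2 ≠ β ^ 2) (by linear_combination hα) (by linear_combination hβroot)
  have ha : a ≠ 0 := by rintro rfl; norm_num at hsum
  have hsqrt : √(-a) = (α * β)⁻¹ :=
    sqrt_neg_eq_inv_of_mul_sq_eq_neg_one (by positivity) (by linear_combination hprod)
  refine ⟨eq_div_of_mul_eq ha (by linear_combination hprod),
    eq_div_of_mul_eq ha (by linear_combination hsum), fun m => ?_, fun m => ?_⟩
  · rw [hsqrt]
    field_simp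
  · rw [hsqrt, integral_energy_eq_ellPi hβ hβα]
    field_simp
    ring

/-- For p = -1 and a ∈ (-4, 0), the positive roots α > β > 0 of aκ⁴ + 4κ² - 1 satisfy
the Vieta relations α²β² = -1/a and α² + β² = -4/a, so 4m/(α³√(-a)) = 4mβ/α², and the
energy integral (2m/√(-a))∫_{β²}^{α²} du/(u√((α²-u)(u-β²)u)) equals 4m(β/α²)Π(ζ², ζ)
with ζ = √(α²-β²)/α. -/
theorem stmt18 (a α β : ℝ) (ha : a ∈ Set.Ioo (-4 : ℝ) 0)
    (hβ : 0 < β) (hβα : β < α)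
    (hα : a * α ^ 4 + 4 * α ^ 2 - 1 = 0) (hβroot : a * β ^ 4 + 4 * β ^ 2 - 1 = 0) :
    α ^ 2 * β ^ 2 = -1 / a ∧
    α ^ 2 + β ^ 2 = -4 / a ∧
    (∀ m : ℝ, 4 * m / (α ^ 3 * Real.sqrt (-a)) = 4 * m * β / α ^ 2) ∧
    ∀ m : ℝ,
      (2 * m / Real.sqrt (-a)) *
          ∫ u in (β ^ 2)..(α ^ 2), 1 / (u * Real.sqrt ((α ^ 2 - u) * (u - β ^ 2) * u)) =
        4 * m * (β / α ^ 2) *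
          ellPi ((Real.sqrt (α ^ 2 - β ^ 2) / α) ^ 2) (Real.sqrt (α ^ 2 - β ^ 2) / α) :=
  stmt18_general a α β hβ hβα hα hβroot
end

section
/- For p > 1 the limit lim_{a → a_*⁺} Θ_p(γ_a) = √(-2a_*)·m·π = √2·m·p^{p/2}(p-1)^{(1-p)/2}·π, where Θ_p(γ_a) = 2mp(p-1)∫_β^α κ^{2(p-1)}/√(a - (p-1)²κ^{2p} + p²κ^{2(p-1)}) dκ and α(a), β(a) are the two positive roots of the radicand, both tending to κ_* = √(p/(p-1)) as a → a_*⁺ = -p^p(p-1)^{1-p}. -/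
open Real MeasureTheory Set Filter intervalIntegral

section AuxStmt19
variable {p : ℝ}

lemma rpow_neg_half_eq {t : ℝ} (ht : 0 ≤ t) : t ^ (-(1/2) : ℝ) = 1 / Real.sqrt t := by
  rw [Real.rpow_neg ht, Real.sqrt_eq_rpow]; norm_num

lemma quad_integrable {a b : ℝ} (hab : a < b) :
    IntervalIntegrable (fun x => 1 / Real.sqrt ((b - x) * (x - a))) volume a b := by
  set C : ℝ := ((b - a)/2) ^ (-(1/2) : ℝ) with hC
  have hC0 : 0 ≤ C := Real.rpow_nonneg (by linarith) _
  have h1 : IntervalIntegrable (fun x => (x - a) ^ (-(1/2) : ℝ)) volume a b := by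
    have := (intervalIntegrable_rpow' (a := 0) (b := b - a)
      (r := (-(1/2) : ℝ)) (by norm_num)).comp_sub_right a
    simpa using this
  have h2 : IntervalIntegrable (fun x => (b - x) ^ (-(1/2) : ℝ)) volume a b := by
    have := (intervalIntegrable_rpow' (a := 0) (b := b - a)
      (r := (-(1/2) : ℝ)) (by norm_num)).comp_sub_left b
    simpa using this.symm
  have hg : IntervalIntegrable
      (fun x => C * ((b - x) ^ (-(1/2) : ℝ) + (x - a) ^ (-(1/2) : ℝ))) volume a b :=
    (h2.add h1).const_mul C
  apply hg.mono_fun'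
  · apply Measurable.aestronglyMeasurable
    exact measurable_const.div
      (((continuous_const.sub continuous_id).mul (continuous_id.sub continuous_const)).sqrt).measurable
  · rw [uIoc_of_le hab.le]
    filter_upwards [ae_restrict_mem measurableSet_Ioc] with x hx
    have hxa : 0 < x - a := by simp at hx; linarith [hx.1]
    have hxb : 0 ≤ b - x := by simp at hx; linarith [hx.2]
    rcases eq_or_lt_of_le hxb with h | hbx
    · have : Real.sqrt ((b - x) * (x - a)) = 0 := by rw [← h]; simp
      rw [this]
      simp only [div_zero, norm_zero]
      positivity
    · have key : 1 / Real.sqrt ((b - x) * (x - a))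
          = (b - x) ^ (-(1/2) : ℝ) * (x - a) ^ (-(1/2) : ℝ) := by
        rw [rpow_neg_half_eq hbx.le, rpow_neg_half_eq hxa.le,
          Real.sqrt_mul hbx.le, div_mul_div_comm, one_mul]
      have hnn : 0 ≤ 1 / Real.sqrt ((b - x) * (x - a)) := by positivity
      rw [Real.norm_eq_abs, abs_of_nonneg hnn, key]
      rcases le_total x ((a+b)/2) with hhalf | hhalf
      · have hb2 : (b - a)/2 ≤ b - x := by linarith
        have : (b - x) ^ (-(1/2) : ℝ) ≤ C := by
          rw [hC]
          exact Real.rpow_le_rpow_of_nonpos (by linarith) hb2 (by norm_num)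
        calc (b - x) ^ (-(1/2) : ℝ) * (x - a) ^ (-(1/2) : ℝ)
            ≤ C * (x - a) ^ (-(1/2) : ℝ) := by
              apply mul_le_mul_of_nonneg_right this (Real.rpow_nonneg hxa.le _)
          _ ≤ C * ((b - x) ^ (-(1/2) : ℝ) + (x - a) ^ (-(1/2) : ℝ)) := by
              apply mul_le_mul_of_nonneg_left _ hC0
              nlinarith [Real.rpow_nonneg hbx.le (-(1/2) : ℝ)]
      · have hb2 : (b - a)/2 ≤ x - a := by linarith
        have : (x - a) ^ (-(1/2) : ℝ) ≤ C := by
          rw [hC]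
          exact Real.rpow_le_rpow_of_nonpos (by linarith) hb2 (by norm_num)
        calc (b - x) ^ (-(1/2) : ℝ) * (x - a) ^ (-(1/2) : ℝ)
            ≤ (b - x) ^ (-(1/2) : ℝ) * C := by
              apply mul_le_mul_of_nonneg_left this (Real.rpow_nonneg hbx.le _)
          _ ≤ C * ((b - x) ^ (-(1/2) : ℝ) + (x - a) ^ (-(1/2) : ℝ)) := by
              nlinarith [Real.rpow_nonneg hxa.le (-(1/2) : ℝ), Real.rpow_nonneg hbx.le (-(1/2) : ℝ)]

lemma quad_integral {a b : ℝ} (hab : a < b) :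
    ∫ x in a..b, 1 / Real.sqrt ((b - x) * (x - a)) = π := by
  have hba : (0:ℝ) < b - a := by linarith
  set A : ℝ → ℝ := fun x => Real.arcsin ((2*x - (a+b))/(b - a)) with hA
  have hcont : ContinuousOn A (Icc a b) :=
    (Real.continuous_arcsin.comp (by fun_prop)).continuousOn
  have hderiv : ∀ x ∈ Ioo a b, HasDerivWithinAt A
      (1 / Real.sqrt ((b - x) * (x - a))) (Ioi x) x := by
    intro x hx
    set u : ℝ := (2*x - (a+b))/(b - a) with hu
    have hu1 : -1 < u := by
      rw [hu, lt_div_iff₀ hba]; nlinarith [hx.1]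
    have hu2 : u < 1 := by
      rw [hu, div_lt_iff₀ hba]; nlinarith [hx.2]
    have haff : HasDerivAt (fun x : ℝ => (2*x - (a+b))/(b - a)) (2/(b-a)) x := by
      simpa using (((hasDerivAt_id x).const_mul 2).sub_const (a+b)).div_const (b-a)
    have harc : HasDerivAt Real.arcsin (1 / Real.sqrt (1 - u^2)) u :=
      Real.hasDerivAt_arcsin hu1.ne' hu2.ne
    have hcomp := (harc.comp x haff)
    have heq : 1 / Real.sqrt (1 - u^2) * (2/(b-a)) = 1 / Real.sqrt ((b - x) * (x - a)) := by
      have h1 : 1 - u^2 = (2/(b-a))^2 * ((b - x) * (x - a)) := by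
        rw [hu]; field_simp; ring
      have h2 : Real.sqrt (1 - u^2) = 2/(b-a) * Real.sqrt ((b - x) * (x - a)) := by
        rw [h1, Real.sqrt_mul (sq_nonneg _), Real.sqrt_sq (by positivity)]
      rw [h2]
      have hq : 0 < Real.sqrt ((b - x) * (x - a)) :=
        Real.sqrt_pos.2 (by nlinarith [hx.1, hx.2])
      field_simp
    rw [← heq]
    exact hcomp.hasDerivWithinAt
  have := integral_eq_sub_of_hasDeriv_right_of_le hab.le hcont hderiv (quad_integrable hab)
  rw [this, hA]
  have h1 : (2*b - (a+b))/(b - a) = 1 := by field_simp; ring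
  have h2 : (2*a - (a+b))/(b - a) = -1 := by field_simp; ring
  simp only [h1, h2, Real.arcsin_one, Real.arcsin_neg_one]
  ring

lemma divdiff {F F' F'' : ℝ → ℝ} {a b : ℝ} (hab : a < b)
    (hF : ∀ x ∈ Icc a b, HasDerivAt F (F' x) x)
    (hF' : ∀ x ∈ Icc a b, HasDerivAt F' (F'' x) x)
    (heq : F a = F b) {κ : ℝ} (hκ : κ ∈ Ioo a b) :
    ∃ ξ ∈ Icc a b, F κ - F b = (b - κ) * (κ - a) * (-(F'' ξ) / 2) := by
  have hq : (b - κ) * (κ - a) ≠ 0 := by nlinarith [hκ.1, hκ.2]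
  set lam : ℝ := (F κ - F b) / ((b - κ) * (κ - a)) with hlam
  set H : ℝ → ℝ := fun x => F x - F b - lam * ((b - x) * (x - a)) with hH
  set H' : ℝ → ℝ := fun x => F' x - lam * (a + b - 2*x) with hH'
  have hHd : ∀ x ∈ Icc a b, HasDerivAt H (H' x) x := by
    intro x hx
    have h1 : HasDerivAt (fun x : ℝ => (b - x) * (x - a)) (a + b - 2*x) x := by
      have := ((hasDerivAt_id x).const_sub b).mul ((hasDerivAt_id x).sub_const a)
      refine this.congr_deriv ?_; simp only [id_eq]; ring
    exact ((hF x hx).sub_const (F b)).sub ((h1.const_mul lam))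
  have hH'd : ∀ x ∈ Icc a b, HasDerivAt H' (F'' x + 2*lam) x := by
    intro x hx
    have h1 : HasDerivAt (fun x : ℝ => a + b - 2*x) (-2) x := by
      exact ((hasDerivAt_const x (a+b)).sub ((hasDerivAt_id x).const_mul 2)).congr_deriv (by ring)
    have := (hF' x hx).sub (h1.const_mul lam)
    refine this.congr_deriv ?_; ring
  have hHcont : ∀ s : Set ℝ, s ⊆ Icc a b → ContinuousOn H s := fun s hs =>
    fun x hx => ((hHd x (hs hx)).continuousAt).continuousWithinAt
  have hHa : H a = 0 := by rw [hH]; simp [heq]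
  have hHb : H b = 0 := by rw [hH]; simp
  have hHκ : H κ = 0 := by
    rw [hH]; simp only
    rw [hlam, div_mul_cancel₀ _ hq]; ring
  obtain ⟨ξ₁, hξ₁, hξ₁'⟩ := exists_hasDerivAt_eq_zero hκ.1
    (hHcont _ (Icc_subset_Icc le_rfl hκ.2.le)) (hHa.trans hHκ.symm)
    (fun x hx => hHd x ⟨hx.1.le, hx.2.le.trans hκ.2.le⟩)
  obtain ⟨ξ₂, hξ₂, hξ₂'⟩ := exists_hasDerivAt_eq_zero hκ.2
    (hHcont _ (Icc_subset_Icc hκ.1.le le_rfl)) (hHκ.trans hHb.symm)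
    (fun x hx => hHd x ⟨hκ.1.le.trans hx.1.le, hx.2.le⟩)
  have h12 : ξ₁ < ξ₂ := hξ₁.2.trans hξ₂.1
  have hsub : Icc ξ₁ ξ₂ ⊆ Icc a b :=
    Icc_subset_Icc (hξ₁.1.le) (hξ₂.2.le.trans le_rfl)
  obtain ⟨ξ, hξ, hξ'⟩ := exists_hasDerivAt_eq_zero h12
    (fun x hx => ((hH'd x (hsub hx)).continuousAt).continuousWithinAt)
    (hξ₁'.trans hξ₂'.symm)
    (fun x hx => hH'd x (hsub ⟨hx.1.le, hx.2.le⟩))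
  refine ⟨ξ, hsub ⟨hξ.1.le, hξ.2.le⟩, ?_⟩
  have hl : lam = -(F'' ξ)/2 := by linarith
  rw [← hl, hlam, mul_comm, div_mul_cancel₀ _ hq]

lemma ks_pos (hp : 1 < p) : 0 < Real.sqrt (p/(p-1)) :=
  Real.sqrt_pos.2 (div_pos (by linarith) (by linarith))

lemma ks_sq (hp : 1 < p) : Real.sqrt (p/(p-1)) ^ (2:ℕ) = p/(p-1) :=
  Real.sq_sqrt (le_of_lt (div_pos (by linarith) (by linarith)))

lemma c_closed (hp : 1 < p) :
    -(p^2*(2*(p-1))*(2*(p-1)-1)*Real.sqrt (p/(p-1))^(2*(p-1)-1-1 : ℝ)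
      - (p-1)^2*(2*p)*(2*p-1)*Real.sqrt (p/(p-1))^(2*p-1-1 : ℝ))/2
      = 2*p^2*(p-1)*Real.sqrt (p/(p-1))^(2*(p-1)-1-1 : ℝ) := by
  set ks := Real.sqrt (p/(p-1)) with hks
  have h1 : (2*p-1-1 : ℝ) = (2*(p-1)-1-1) + (2:ℕ) := by push_cast; ring
  have h2 : ks^(2*p-1-1 : ℝ) = ks^(2*(p-1)-1-1 : ℝ) * (p/(p-1)) := by
    rw [h1, Real.rpow_add (ks_pos hp), Real.rpow_natCast, ks_sq hp]
  rw [h2]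
  have hp1 : p - 1 ≠ 0 := by linarith
  field_simp
  ring

lemma sq_eq_imp {A B : ℝ} (hA : 0 ≤ A) (hB : 0 ≤ B) (h : A^(2:ℕ) = B^(2:ℕ)) : A = B := by
  rw [← Real.sqrt_sq hA, ← Real.sqrt_sq hB, h]

lemma rpow_sq {x : ℝ} (hx : 0 ≤ x) (e : ℝ) : (x^(e:ℝ))^(2:ℕ) = x^(2*e:ℝ) := by
  rw [show (2*e : ℝ) = e*2 by ring, Real.rpow_mul hx,
    show ((2:ℝ)) = ((2:ℕ):ℝ) by norm_num, Real.rpow_natCast]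

lemma ks_rpow (hp : 1 < p) (y : ℝ) :
    Real.sqrt (p/(p-1)) ^ (y : ℝ) = (p/(p-1)) ^ (y/2 : ℝ) := by
  have hq : (0:ℝ) ≤ p/(p-1) := le_of_lt (div_pos (by linarith) (by linarith))
  rw [Real.sqrt_eq_rpow, ← Real.rpow_mul hq]
  congr 1; ring

lemma L_eq (hp : 1 < p) :
    2 * p * (p-1) * (Real.sqrt (p/(p-1))^(2*(p-1) : ℝ) * Real.pi
      / Real.sqrt (2*p^2*(p-1)*Real.sqrt (p/(p-1))^(2*(p-1)-1-1 : ℝ)))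
      = Real.sqrt 2 * p^(p/2) * (p-1)^((1-p)/2) * Real.pi := by
  have hp0 : (0:ℝ) < p := by linarith
  have hp1 : (0:ℝ) < p - 1 := by linarith
  have hq : (0:ℝ) < p/(p-1) := div_pos hp0 hp1
  have hkp := ks_pos hp
  set ks := Real.sqrt (p/(p-1)) with hks
  set P2 : ℝ := p^(p-2:ℝ) with hP2
  set Q2 : ℝ := (p-1)^(p-2:ℝ) with hQ2
  have hP2p : 0 < P2 := Real.rpow_pos_of_pos hp0 _
  have hQ2p : 0 < Q2 := Real.rpow_pos_of_pos hp1 _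
  have hkse : 0 < ks^(2*(p-1)-1-1 : ℝ) := Real.rpow_pos_of_pos hkp _
  have hC : 0 < 2*p^2*(p-1)*ks^(2*(p-1)-1-1 : ℝ) := by positivity
  apply sq_eq_imp
  · have h1 : 0 < ks^(2*(p-1) : ℝ) := Real.rpow_pos_of_pos hkp _
    have h2 : 0 ≤ Real.sqrt (2*p^2*(p-1)*ks^(2*(p-1)-1-1 : ℝ)) := Real.sqrt_nonneg _
    positivity
  · have h1 : 0 ≤ Real.sqrt 2 := Real.sqrt_nonneg _
    have h2 : 0 < p^(p/2:ℝ) := Real.rpow_pos_of_pos hp0 _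
    have h3 : 0 < (p-1)^((1-p)/2:ℝ) := Real.rpow_pos_of_pos hp1 _
    positivity
  have e1 : (ks^(2*(p-1) : ℝ))^(2:ℕ) = (P2*P2*p^(2:ℕ)) / (Q2*Q2*(p-1)^(2:ℕ)) := by
    rw [rpow_sq hkp.le, hks, ks_rpow hp, Real.div_rpow hp0.le hp1.le, hP2, hQ2,
      ← Real.rpow_natCast p 2, ← Real.rpow_natCast (p-1) 2,
      ← Real.rpow_add hp0, ← Real.rpow_add hp0, ← Real.rpow_add hp1, ← Real.rpow_add hp1]
    congr 2 <;> push_cast <;> ring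
  have e2 : ks^(2*(p-1)-1-1 : ℝ) = P2/Q2 := by
    rw [hks, ks_rpow hp, Real.div_rpow hp0.le hp1.le, hP2, hQ2]
    congr 2 <;> ring
  have e3 : (Real.sqrt (2*p^2*(p-1)*ks^(2*(p-1)-1-1 : ℝ)))^(2:ℕ)
      = 2*p^2*(p-1)*(P2/Q2) := by rw [Real.sq_sqrt hC.le, e2]
  have e4 : (Real.sqrt 2)^(2:ℕ) = 2 := Real.sq_sqrt (by norm_num)
  have e5 : (p^(p/2 : ℝ))^(2:ℕ) = P2*p^(2:ℕ) := by
    rw [rpow_sq hp0.le, hP2, ← Real.rpow_natCast p 2, ← Real.rpow_add hp0]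
    congr 1; push_cast; ring
  have e6 : ((p-1)^((1-p)/2 : ℝ))^(2:ℕ) = (Q2*(p-1))⁻¹ := by
    rw [rpow_sq hp1.le, show (2*((1-p)/2) : ℝ) = -((p-2)+1) by ring,
      Real.rpow_neg hp1.le, Real.rpow_add hp1, Real.rpow_one, hQ2]
  rw [mul_pow, mul_pow, mul_pow, div_pow, mul_pow, mul_pow, mul_pow, mul_pow,
    e1, e3, e4, e5, e6]
  field_simp

lemma conj2 {p : ℝ} (hp : 1 < p) :
    Real.sqrt (-2 * (-(p ^ p * (p - 1) ^ (1 - p)))) = Real.sqrt 2 * p^(p/2) * (p-1)^((1-p)/2) := by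
  have hp0 : (0:ℝ) < p := by linarith
  have hp1 : (0:ℝ) < p - 1 := by linarith
  rw [show (-2 * (-(p ^ p * (p - 1) ^ (1 - p))) : ℝ) = 2 * (p^p * (p-1)^(1-p)) by ring,
    Real.sqrt_mul (by norm_num), Real.sqrt_mul (Real.rpow_pos_of_pos hp0 _).le,
    Real.sqrt_eq_rpow (p^p), Real.sqrt_eq_rpow ((p-1)^(1-p:ℝ)),
    ← Real.rpow_mul hp0.le, ← Real.rpow_mul hp1.le]
  rw [show (p * (1/2) : ℝ) = p/2 by ring, show ((1-p) * (1/2) : ℝ) = (1-p)/2 by ring, mul_assoc]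

end AuxStmt19

set_option maxHeartbeats 2000000 in
/-- For p > 1, the p-elastic energy Θ_p(γ_a) = 2mp(p-1)∫_β^α κ^{2(p-1)}/√(f_a(κ)) dκ,
where β(a) < α(a) are the two positive roots of
f_a(κ) = a - (p-1)²κ^{2p} + p²κ^{2(p-1)} and both tend to κ_* = √(p/(p-1)) as
a → a_*⁺ = -p^p(p-1)^{1-p}, tends to √(-2a_*)·m·π = √2·m·p^{p/2}(p-1)^{(1-p)/2}·π. -/
theorem stmt19 (p : ℝ) (hp : 1 < p) (m : ℕ) (hm : 0 < m)
    (α β : ℝ → ℝ)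
    (hroots : ∀ a ∈ Set.Ioo (-(p ^ p * (p - 1) ^ (1 - p))) (0 : ℝ),
      0 < β a ∧ β a < α a ∧
      a - (p - 1) ^ 2 * α a ^ (2 * p) + p ^ 2 * α a ^ (2 * (p - 1)) = 0 ∧
      a - (p - 1) ^ 2 * β a ^ (2 * p) + p ^ 2 * β a ^ (2 * (p - 1)) = 0)
    (hαlim : Filter.Tendsto α
      (nhdsWithin (-(p ^ p * (p - 1) ^ (1 - p))) (Set.Ioi (-(p ^ p * (p - 1) ^ (1 - p)))))
      (nhds (Real.sqrt (p / (p - 1)))))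
    (hβlim : Filter.Tendsto β
      (nhdsWithin (-(p ^ p * (p - 1) ^ (1 - p))) (Set.Ioi (-(p ^ p * (p - 1) ^ (1 - p)))))
      (nhds (Real.sqrt (p / (p - 1))))) :
    Filter.Tendsto
      (fun a : ℝ => 2 * (m : ℝ) * p * (p - 1) *
        ∫ κ in (β a)..(α a), κ ^ (2 * (p - 1)) /
          Real.sqrt (a - (p - 1) ^ 2 * κ ^ (2 * p) + p ^ 2 * κ ^ (2 * (p - 1))))
      (nhdsWithin (-(p ^ p * (p - 1) ^ (1 - p))) (Set.Ioi (-(p ^ p * (p - 1) ^ (1 - p)))))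
      (nhds (Real.sqrt 2 * (m : ℝ) * p ^ (p / 2) * (p - 1) ^ ((1 - p) / 2) * Real.pi)) ∧
    Real.sqrt (-2 * (-(p ^ p * (p - 1) ^ (1 - p)))) * (m : ℝ) * Real.pi =
      Real.sqrt 2 * (m : ℝ) * p ^ (p / 2) * (p - 1) ^ ((1 - p) / 2) * Real.pi := by
  have hp0 : (0:ℝ) < p := by linarith
  have hp1 : (0:ℝ) < p - 1 := by linarith
  have hm' : (0:ℝ) < (m:ℝ) := by exact_mod_cast hm
  set a0 : ℝ := -(p ^ p * (p - 1) ^ (1 - p)) with ha0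
  have ha0neg : a0 < 0 := by
    have h1 : 0 < p ^ p * (p - 1) ^ (1 - p) :=
      mul_pos (Real.rpow_pos_of_pos hp0 _) (Real.rpow_pos_of_pos hp1 _)
    rw [ha0]; linarith
  set ks : ℝ := Real.sqrt (p/(p-1)) with hks
  have hkp : 0 < ks := ks_pos hp
  set l := nhdsWithin a0 (Set.Ioi a0) with hldef
  set G : ℝ → ℝ := fun x => p^2 * x^(2*(p-1) : ℝ) - (p-1)^2 * x^(2*p : ℝ) with hG
  set G' : ℝ → ℝ := fun x =>
    p^2*(2*(p-1))*x^(2*(p-1)-1 : ℝ) - (p-1)^2*(2*p)*x^(2*p-1 : ℝ) with hG'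
  set G'' : ℝ → ℝ := fun x =>
    p^2*(2*(p-1))*(2*(p-1)-1)*x^(2*(p-1)-1-1 : ℝ)
      - (p-1)^2*(2*p)*(2*p-1)*x^(2*p-1-1 : ℝ) with hG''
  have hGd : ∀ x : ℝ, 0 < x → HasDerivAt G (G' x) x := by
    intro x hx
    have h1 := (Real.hasDerivAt_rpow_const (x := x) (p := (2*(p-1) : ℝ))
      (Or.inl hx.ne')).const_mul (p^2)
    have h2 := (Real.hasDerivAt_rpow_const (x := x) (p := (2*p : ℝ))
      (Or.inl hx.ne')).const_mul ((p-1)^2)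
    have := h1.sub h2
    refine this.congr_deriv ?_
    rw [hG']; ring
  have hG'd : ∀ x : ℝ, 0 < x → HasDerivAt G' (G'' x) x := by
    intro x hx
    have h1 := (Real.hasDerivAt_rpow_const (x := x) (p := (2*(p-1)-1 : ℝ))
      (Or.inl hx.ne')).const_mul (p^2*(2*(p-1)))
    have h2 := (Real.hasDerivAt_rpow_const (x := x) (p := (2*p-1 : ℝ))
      (Or.inl hx.ne')).const_mul ((p-1)^2*(2*p))
    have := h1.sub h2
    refine this.congr_deriv ?_
    rw [hG'']; ring
  set c : ℝ := 2*p^2*(p-1)*ks^(2*(p-1)-1-1 : ℝ) with hcdef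
  have hckc : -(G'' ks)/2 = c := c_closed hp
  have hcpos : 0 < c := by
    have := Real.rpow_pos_of_pos hkp (2*(p-1)-1-1 : ℝ)
    rw [hcdef]; positivity
  set hstar : ℝ := ks^(2*(p-1) : ℝ) with hstardef
  have hstarpos : 0 < hstar := Real.rpow_pos_of_pos hkp _
  have hL' : 2*(m:ℝ)*p*(p-1)*(hstar * π / Real.sqrt c)
      = Real.sqrt 2 * (m:ℝ) * p^(p/2) * (p-1)^((1-p)/2) * π := by
    have h := L_eq hp
    rw [hstardef, hcdef, hks]
    linear_combination (m:ℝ) * h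
  constructor
  · rw [← hL']
    rw [Metric.tendsto_nhds]
    intro ε hε
    -- choose δ
    have hcU : ContinuousAt
        (fun d : ℝ => 2*(m:ℝ)*p*(p-1)*((hstar+d) * π / Real.sqrt (c-d))) 0 := by
      have h1 : ContinuousAt (fun d : ℝ => Real.sqrt (c-d)) 0 :=
        (Real.continuous_sqrt.comp (continuous_const.sub continuous_id)).continuousAt
      have h2 : Real.sqrt (c - 0) ≠ 0 := by
        rw [sub_zero]; exact (Real.sqrt_pos.2 hcpos).ne'
      exact continuousAt_const.mul
        (((continuousAt_const.add continuousAt_id).mul continuousAt_const).div h1 h2)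
    have hcLo : ContinuousAt
        (fun d : ℝ => 2*(m:ℝ)*p*(p-1)*((hstar-d) * π / Real.sqrt (c+d))) 0 := by
      have h1 : ContinuousAt (fun d : ℝ => Real.sqrt (c+d)) 0 :=
        (Real.continuous_sqrt.comp (continuous_const.add continuous_id)).continuousAt
      have h2 : Real.sqrt (c + 0) ≠ 0 := by
        rw [add_zero]; exact (Real.sqrt_pos.2 hcpos).ne'
      exact continuousAt_const.mul
        (((continuousAt_const.sub continuousAt_id).mul continuousAt_const).div h1 h2)
    have hTU := hcU.tendsto
    have hTLo := hcLo.tendsto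
    simp only [add_zero, sub_zero] at hTU hTLo
    have hU' := Metric.tendsto_nhds.mp hTU ε hε
    have hLo' := Metric.tendsto_nhds.mp hTLo ε hε
    have hδex : ∃ d : ℝ, 0 < d ∧ d < hstar ∧ d < c ∧
        dist (2*(m:ℝ)*p*(p-1)*((hstar+d) * π / Real.sqrt (c-d)))
          (2*(m:ℝ)*p*(p-1)*(hstar * π / Real.sqrt c)) < ε ∧
        dist (2*(m:ℝ)*p*(p-1)*((hstar-d) * π / Real.sqrt (c+d)))
          (2*(m:ℝ)*p*(p-1)*(hstar * π / Real.sqrt c)) < ε := by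
      have h3 : ∀ᶠ d in nhds (0:ℝ), d < hstar := eventually_lt_nhds hstarpos
      have h4 : ∀ᶠ d in nhds (0:ℝ), d < c := eventually_lt_nhds hcpos
      have hall := ((hU'.and hLo').and (h3.and h4)).filter_mono
        (nhdsWithin_le_nhds (s := Set.Ioi (0:ℝ)))
      have h5 : ∀ᶠ d in nhdsWithin (0:ℝ) (Set.Ioi 0), d ∈ Set.Ioi (0:ℝ) :=
        eventually_mem_nhdsWithin
      obtain ⟨d, ⟨⟨hd1, hd2⟩, hd3, hd4⟩, hd5⟩ := (hall.and h5).exists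
      exact ⟨d, hd5, hd3, hd4, hd1, hd2⟩
    obtain ⟨δ, hδ0, hδh, hδc, hUδ, hLoδ⟩ := hδex
    -- good neighbourhood of ks
    have hh : ContinuousAt (fun x : ℝ => x ^ (2*(p-1) : ℝ)) ks :=
      Real.continuousAt_rpow_const ks _ (Or.inl hkp.ne')
    have hg'' : ContinuousAt (fun x : ℝ => -(G'' x)/2) ks := by
      have c1 : ContinuousAt (fun x : ℝ => x ^ (2*(p-1)-1-1 : ℝ)) ks :=
        Real.continuousAt_rpow_const _ _ (Or.inl hkp.ne')
      have c2 : ContinuousAt (fun x : ℝ => x ^ (2*p-1-1 : ℝ)) ks :=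
        Real.continuousAt_rpow_const _ _ (Or.inl hkp.ne')
      exact (((c1.const_mul _).sub (c2.const_mul _)).neg).div_const 2
    have ev1 : ∀ᶠ x in nhds ks, 0 < x := eventually_gt_nhds hkp
    have ev2 : ∀ᶠ x in nhds ks, |x^(2*(p-1):ℝ) - hstar| < δ := by
      have := Metric.tendsto_nhds.mp hh.tendsto δ hδ0
      simpa [Real.dist_eq, hstardef] using this
    have ev3 : ∀ᶠ x in nhds ks, |(-(G'' x)/2) - c| < δ := by
      have := Metric.tendsto_nhds.mp hg''.tendsto δ hδ0
      rw [hckc] at this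
      simpa [Real.dist_eq] using this
    obtain ⟨η, hη, hball⟩ := Metric.eventually_nhds_iff_ball.mp (ev1.and (ev2.and ev3))
    have evα : ∀ᶠ a in l, α a ∈ Metric.ball ks η := hαlim (Metric.ball_mem_nhds _ hη)
    have evβ : ∀ᶠ a in l, β a ∈ Metric.ball ks η := hβlim (Metric.ball_mem_nhds _ hη)
    have evI : ∀ᶠ a in l, a ∈ Set.Ioi a0 := eventually_mem_nhdsWithin
    have ev0 : ∀ᶠ a in l, a < 0 :=
      (eventually_lt_nhds ha0neg).filter_mono nhdsWithin_le_nhds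
    filter_upwards [evα, evβ, evI, ev0] with a haball hbball haI hneg
    obtain ⟨hB0, hBA, hrootA, hrootB⟩ := hroots a ⟨haI, hneg⟩
    rw [Real.dist_eq]
    -- all points of [β a, α a] are in the good ball
    have hABsub : ∀ x ∈ Icc (β a) (α a), x ∈ Metric.ball ks η := by
      intro x hx
      rw [Metric.mem_ball, Real.dist_eq] at *
      have h1 := abs_lt.mp haball
      have h2 := abs_lt.mp hbball
      rw [abs_lt]
      constructor <;> [linarith [hx.1]; linarith [hx.2]]
    have hgood : ∀ x ∈ Icc (β a) (α a),
        0 < x ∧ |x^(2*(p-1):ℝ) - hstar| < δ ∧ |(-(G'' x)/2) - c| < δ :=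
      fun x hx => hball x (hABsub x hx)
    have hGA : G (α a) = -a := by
      rw [hG]; simp only; linarith [hrootA]
    have hGB : G (β a) = -a := by
      rw [hG]; simp only; linarith [hrootB]
    set f : ℝ → ℝ := fun κ =>
      a - (p - 1) ^ 2 * κ ^ (2 * p) + p ^ 2 * κ ^ (2 * (p - 1)) with hfdef
    have hfG : ∀ κ, f κ = G κ - G (α a) := by
      intro κ; rw [hGA, hfdef, hG]; simp only; ring
    have hfB : f (β a) = 0 := hrootB
    have hfA : f (α a) = 0 := hrootA
    have hsand : ∀ κ ∈ Icc (β a) (α a),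
        (c-δ)*((α a - κ)*(κ - β a)) ≤ f κ ∧ f κ ≤ (c+δ)*((α a - κ)*(κ - β a)) := by
      intro κ hκ
      rcases eq_or_lt_of_le hκ.1 with he | hBκ
      · rw [← he, hfB]; simp
      rcases eq_or_lt_of_le hκ.2 with he | hκA
      · rw [he, hfA]; simp
      obtain ⟨ξ, hξ, hfact⟩ := divdiff (F := G) (F' := G') (F'' := G'') hBA
        (fun x hx => hGd x (hgood x hx).1) (fun x hx => hG'd x (hgood x hx).1)
        (hGB.trans hGA.symm) ⟨hBκ, hκA⟩
      have habs := abs_lt.mp (hgood ξ hξ).2.2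
      have hq0 : 0 ≤ (α a - κ)*(κ - β a) := mul_nonneg (by linarith) (by linarith)
      rw [hfG κ, hfact]
      constructor <;> nlinarith
    set U : ℝ := (hstar + δ)/Real.sqrt (c - δ) with hUdef
    set Lo : ℝ := (hstar - δ)/Real.sqrt (c + δ) with hLodef
    have hbounds : ∀ κ ∈ Icc (β a) (α a),
        Lo * (1 / Real.sqrt ((α a - κ)*(κ - β a))) ≤ κ^(2*(p-1):ℝ) / Real.sqrt (f κ) ∧
        κ^(2*(p-1):ℝ) / Real.sqrt (f κ) ≤ U * (1 / Real.sqrt ((α a - κ)*(κ - β a))) := by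
      intro κ hκ
      have hκ0 : 0 < κ := (hgood κ hκ).1
      have hhb := abs_lt.mp (hgood κ hκ).2.1
      have hrnn : 0 ≤ κ^(2*(p-1):ℝ) := (Real.rpow_pos_of_pos hκ0 _).le
      rcases eq_or_lt_of_le hκ.1 with he | hBκ
      · rw [← he, hfB]; simp
      rcases eq_or_lt_of_le hκ.2 with he | hκA
      · rw [he, hfA]; simp
      have hQ : 0 < (α a - κ)*(κ - β a) := by nlinarith
      have hsQ : 0 < Real.sqrt ((α a - κ)*(κ - β a)) := Real.sqrt_pos.2 hQ
      have hfpos : 0 < f κ := by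
        have := (hsand κ hκ).1; nlinarith
      have hsf : 0 < Real.sqrt (f κ) := Real.sqrt_pos.2 hfpos
      constructor
      · -- lower bound
        have h1 : Real.sqrt (f κ) ≤ Real.sqrt (c+δ) * Real.sqrt ((α a - κ)*(κ - β a)) := by
          rw [← Real.sqrt_mul (by linarith)]
          exact Real.sqrt_le_sqrt (hsand κ hκ).2
        have h2 : 0 < Real.sqrt (c+δ) * Real.sqrt ((α a - κ)*(κ - β a)) :=
          mul_pos (Real.sqrt_pos.2 (by linarith)) hsQ
        have h3 := div_le_div₀ hrnn (by linarith [hhb.1] : hstar - δ ≤ κ^(2*(p-1):ℝ)) hsf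
          (le_refl (Real.sqrt (f κ)))
        calc Lo * (1 / Real.sqrt ((α a - κ)*(κ - β a)))
            = (hstar - δ) / (Real.sqrt (c+δ) * Real.sqrt ((α a - κ)*(κ - β a))) := by
              rw [hLodef, div_mul_div_comm, mul_one]
          _ ≤ κ^(2*(p-1):ℝ) / Real.sqrt (f κ) :=
              div_le_div₀ hrnn (by linarith [hhb.1]) hsf h1
      · have h1 : Real.sqrt (c-δ) * Real.sqrt ((α a - κ)*(κ - β a)) ≤ Real.sqrt (f κ) := by
          rw [← Real.sqrt_mul (by linarith)]
          exact Real.sqrt_le_sqrt (hsand κ hκ).1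
        have h2 : 0 < Real.sqrt (c-δ) * Real.sqrt ((α a - κ)*(κ - β a)) :=
          mul_pos (Real.sqrt_pos.2 (by linarith)) hsQ
        calc κ^(2*(p-1):ℝ) / Real.sqrt (f κ)
            ≤ (hstar + δ) / (Real.sqrt (c-δ) * Real.sqrt ((α a - κ)*(κ - β a))) :=
              div_le_div₀ (by linarith) (by linarith [hhb.2]) h2 h1
          _ = U * (1 / Real.sqrt ((α a - κ)*(κ - β a))) := by
              rw [hUdef, div_mul_div_comm, mul_one]
    have hqint := quad_integrable hBA
    have hUq : IntervalIntegrable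
        (fun κ => U * (1 / Real.sqrt ((α a - κ)*(κ - β a)))) volume (β a) (α a) :=
      hqint.const_mul U
    have hLoq : IntervalIntegrable
        (fun κ => Lo * (1 / Real.sqrt ((α a - κ)*(κ - β a)))) volume (β a) (α a) :=
      hqint.const_mul Lo
    have hmeas : AEStronglyMeasurable (fun κ => κ^(2*(p-1):ℝ) / Real.sqrt (f κ))
        (volume.restrict (Set.uIoc (β a) (α a))) := by
      apply Measurable.aestronglyMeasurable
      apply Measurable.div
      · exact (continuous_iff_continuousAt.2 fun x =>
          Real.continuousAt_rpow_const x _ (Or.inr (by positivity))).measurable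
      · apply Real.continuous_sqrt.measurable.comp
        apply Measurable.add
        · apply Measurable.sub measurable_const
          exact (measurable_const.mul ((continuous_iff_continuousAt.2 fun x =>
            Real.continuousAt_rpow_const x _ (Or.inr (by positivity))).measurable))
        · exact (measurable_const.mul ((continuous_iff_continuousAt.2 fun x =>
            Real.continuousAt_rpow_const x _ (Or.inr (by positivity))).measurable))
    have hint : IntervalIntegrable (fun κ => κ^(2*(p-1):ℝ) / Real.sqrt (f κ))
        volume (β a) (α a) := by
      apply hUq.mono_fun' hmeas
      rw [uIoc_of_le hBA.le]
      filter_upwards [ae_restrict_mem measurableSet_Ioc] with x hx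
      have hx' : x ∈ Icc (β a) (α a) := ⟨hx.1.le, hx.2⟩
      have hκ0 : 0 < x := (hgood x hx').1
      have hnn : 0 ≤ x^(2*(p-1):ℝ) / Real.sqrt (f x) := by positivity
      rw [Real.norm_eq_abs, abs_of_nonneg hnn]
      exact (hbounds x hx').2
    have iUp : (∫ κ in (β a)..(α a), κ^(2*(p-1):ℝ) / Real.sqrt (f κ)) ≤ U * π := by
      have h := intervalIntegral.integral_mono_on hBA.le hint hUq
        (fun x hx => (hbounds x hx).2)
      rwa [intervalIntegral.integral_const_mul, quad_integral hBA] at h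
    have iLo : Lo * π ≤ (∫ κ in (β a)..(α a), κ^(2*(p-1):ℝ) / Real.sqrt (f κ)) := by
      have h := intervalIntegral.integral_mono_on hBA.le hLoq hint
        (fun x hx => (hbounds x hx).1)
      rwa [intervalIntegral.integral_const_mul, quad_integral hBA] at h
    -- conclude
    have hpos2 : (0:ℝ) < 2*(m:ℝ)*p*(p-1) := by positivity
    rw [Real.dist_eq] at hUδ hLoδ
    have hUd := abs_lt.mp hUδ
    have hLod := abs_lt.mp hLoδ
    have e1 : 2*(m:ℝ)*p*(p-1) * (U * π) = 2*(m:ℝ)*p*(p-1)*((hstar+δ) * π / Real.sqrt (c-δ)) := by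
      rw [hUdef]; ring
    have e2 : 2*(m:ℝ)*p*(p-1) * (Lo * π) = 2*(m:ℝ)*p*(p-1)*((hstar-δ) * π / Real.sqrt (c+δ)) := by
      rw [hLodef]; ring
    have hIle := mul_le_mul_of_nonneg_left iUp hpos2.le
    have hIge := mul_le_mul_of_nonneg_left iLo hpos2.le
    rw [e1] at hIle
    rw [e2] at hIge
    have hgoalI : (∫ κ in (β a)..(α a), κ ^ (2*(p-1):ℝ) /
        Real.sqrt (a - (p - 1) ^ 2 * κ ^ (2 * p) + p ^ 2 * κ ^ (2 * (p - 1))))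
        = ∫ κ in (β a)..(α a), κ^(2*(p-1):ℝ)/Real.sqrt (f κ) := rfl
    rw [hgoalI, abs_lt]
    constructor
    · linarith [hLod.1, hIge]
    · linarith [hUd.2, hIle]
  · rw [ha0, conj2 hp]; ring
end
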